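/- (Proposition on lifting asynchronous trajectories to refinements.) Let h be a refinement of f built from a DNF parameterisation in which no multivalued component is self-inhibited (i.e., for each j ∈ J, the variable x_j does not occur in any clause of f_j whose truth triggers an increase or decrease of component j). Let a, a' ∈ {0,1}^n with an asynchronous transition a → a' of f differing in one coordinate j₀, and let b, b' ∈ X be obtained from a, a' by replacing each coordinate equal to 1 with m_j. Then there is a trajectory from b to b' in the asynchronous dynamics of h, of length m_{j₀}. -/

import Mathlib

/-- Activity levels of the most permissive scheme: 0, 1, increasing, decreasing. -/
inductive MPLevel : Type
  | zero | one | inc | dec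
deriving DecidableEq

/-- The set γ(x̂) of Boolean states compatible with an m.p. state x̂. -/
def mpGamma {n : ℕ} (x : Fin n → MPLevel) : Set (Fin n → Bool) :=
  {x' | ∀ j, (x j = MPLevel.zero → x' j = false) ∧ (x j = MPLevel.one → x' j = true)}

/-- The set α(x) of Boolean states compatible with a multivalued state x. -/
def mvAlpha {n : ℕ} (m x : Fin n → ℕ) : Set (Fin n → Bool) :=
  {x' | ∀ j, (x j = 0 → x' j = false) ∧ (x j = m j → x' j = true)}

/-- Coordinatewise embedding of Boolean states into m.p. states. -/
def embBM {n : ℕ} (x : Fin n → Bool) : Fin n → MPLevel :=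
  fun j => if x j then MPLevel.one else MPLevel.zero

/-- Embedding of a Boolean state into X = ∏ {0,…,m_j}, sending 1 to m_j. -/
def embX {n : ℕ} (m : Fin n → ℕ) (x : Fin n → Bool) : Fin n → ℕ :=
  fun j => if x j then m j else 0

/-- Transition of the most permissive dynamics of f at coordinate j0. -/
def mpTransAt {n : ℕ} (f : (Fin n → Bool) → Fin n → Bool) (j0 : Fin n)
    (x y : Fin n → MPLevel) : Prop :=
  (∀ j, j ≠ j0 → y j = x j) ∧
    (((x j0 = MPLevel.zero ∨ x j0 = MPLevel.dec) ∧ (∃ x' ∈ mpGamma x, f x' j0 = true) ∧ y j0 = MPLevel.inc) ∨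
     ((x j0 = MPLevel.one ∨ x j0 = MPLevel.inc) ∧ (∃ x' ∈ mpGamma x, f x' j0 = false) ∧ y j0 = MPLevel.dec) ∨
     (x j0 = MPLevel.inc ∧ y j0 = MPLevel.one) ∨
     (x j0 = MPLevel.dec ∧ y j0 = MPLevel.zero))

/-- Transition of the most permissive dynamics of f. -/
def mpTrans {n : ℕ} (f : (Fin n → Bool) → Fin n → Bool) (x y : Fin n → MPLevel) : Prop :=
  ∃ j0, mpTransAt f j0 x y

/-- Transition of the partial J-most-permissive dynamics of f at coordinate j0. -/
def pmpTransAt {n : ℕ} (J : Set (Fin n)) (f : (Fin n → Bool) → Fin n → Bool) (j0 : Fin n)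
    (x y : Fin n → MPLevel) : Prop :=
  (∀ j, j ≠ j0 → y j = x j) ∧
    (((x j0 = MPLevel.zero ∨ x j0 = MPLevel.dec) ∧ (∃ x' ∈ mpGamma x, f x' j0 = true) ∧ y j0 = MPLevel.inc) ∨
     ((x j0 = MPLevel.one ∨ x j0 = MPLevel.inc) ∧ (∃ x' ∈ mpGamma x, f x' j0 = false) ∧ y j0 = MPLevel.dec) ∨
     (x j0 = MPLevel.inc ∧ y j0 = MPLevel.one) ∨
     (x j0 = MPLevel.dec ∧ y j0 = MPLevel.zero) ∨
     (j0 ∉ J ∧ x j0 = MPLevel.zero ∧ (∃ x' ∈ mpGamma x, f x' j0 = true) ∧ y j0 = MPLevel.one) ∨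
     (j0 ∉ J ∧ x j0 = MPLevel.one ∧ (∃ x' ∈ mpGamma x, f x' j0 = false) ∧ y j0 = MPLevel.zero))

/-- Transition of the partial J-most-permissive dynamics of f. -/
def pmpTrans {n : ℕ} (J : Set (Fin n)) (f : (Fin n → Bool) → Fin n → Bool)
    (x y : Fin n → MPLevel) : Prop :=
  ∃ j0, pmpTransAt J f j0 x y

/-- A state of X_{J m.p.}: coordinates outside J are Boolean. -/
def inXJ {n : ℕ} (J : Set (Fin n)) (x : Fin n → MPLevel) : Prop :=
  ∀ j, j ∉ J → (x j = MPLevel.zero ∨ x j = MPLevel.one)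

/-- Asynchronous transition of a Boolean model f. -/
def asyncTransB {n : ℕ} (f : (Fin n → Bool) → Fin n → Bool) (x y : Fin n → Bool) : Prop :=
  ∃ j0, f x j0 ≠ x j0 ∧ y j0 = f x j0 ∧ ∀ j, j ≠ j0 → y j = x j

/-- Asynchronous transition of a multivalued model h (one coordinate moves by 1 toward its target). -/
def asyncTrans {n : ℕ} (h : (Fin n → ℕ) → Fin n → ℕ) (x y : Fin n → ℕ) : Prop :=
  ∃ j0, h x j0 ≠ x j0 ∧ (∀ j, j ≠ j0 → y j = x j) ∧
    ((x j0 < h x j0 ∧ y j0 = x j0 + 1) ∨ (h x j0 < x j0 ∧ y j0 = x j0 - 1))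

/-- An m.p. state x̂ is compatible with a multivalued state x. -/
def mpCompat {n : ℕ} (m x : Fin n → ℕ) (xh : Fin n → MPLevel) : Prop :=
  ∀ j, (x j = 0 → xh j = MPLevel.zero) ∧ (x j = m j → xh j = MPLevel.one) ∧
    (0 < x j → x j < m j → (xh j = MPLevel.inc ∨ xh j = MPLevel.dec))

/-- h is a multivalued model on X = ∏ {0,…,m_j}: maps X to X, moving each coordinate by at most 1. -/
def isMVModel {n : ℕ} (m : Fin n → ℕ) (h : (Fin n → ℕ) → Fin n → ℕ) : Prop :=
  ∀ x, (∀ j, x j ≤ m j) → ∀ j, h x j ≤ m j ∧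
    (h x j = x j ∨ h x j = x j + 1 ∨ h x j + 1 = x j)

/-- h is a multivalued refinement of the Boolean model f. -/
def isRefinement {n : ℕ} (m : Fin n → ℕ) (f : (Fin n → Bool) → Fin n → Bool)
    (h : (Fin n → ℕ) → Fin n → ℕ) : Prop :=
  ∀ x, (∀ j, x j ≤ m j) → ∀ j,
    (h x j < x j → ∃ x' ∈ mvAlpha m x, f x' j = false ∧ x' j = true) ∧
    (x j < h x j → ∃ x' ∈ mvAlpha m x, f x' j = true ∧ x' j = false)

/-- A literal in a DNF: a regulator index, a polarity, and a threshold (used in the multivalued reading). -/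
structure Lit (n : ℕ) where
  idx : Fin n
  pos : Bool
  thr : ℕ

/-- Boolean evaluation of a literal (threshold ignored). -/
def evalLitB {n : ℕ} (x : Fin n → Bool) (l : Lit n) : Bool :=
  if l.pos then x l.idx else !(x l.idx)

/-- Multivalued evaluation of a literal: x_idx ≥ thr+1 for a positive literal, x_idx < thr+1 otherwise. -/
def evalLitM {n : ℕ} (x : Fin n → ℕ) (l : Lit n) : Bool :=
  if l.pos then decide (l.thr + 1 ≤ x l.idx) else decide (x l.idx < l.thr + 1)

/-- Boolean evaluation of a DNF (list of conjunctive clauses). -/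
def evalDNFB {n : ℕ} (x : Fin n → Bool) (φ : List (List (Lit n))) : Bool :=
  φ.any fun c => c.all (evalLitB x)

/-- Multivalued evaluation of a DNF via the thresholds. -/
def evalDNFM {n : ℕ} (x : Fin n → ℕ) (φ : List (List (Lit n))) : Bool :=
  φ.any fun c => c.all (evalLitM x)

/-- Refinement built from the DNF threshold parameterisation:
h_j(x) = max(0, min(m_j, x_j + H_j(x))) with H_j(x) = +1 iff the multivalued DNF of f_j is true. -/
def hDNF {n : ℕ} (m : Fin n → ℕ) (φ : Fin n → List (List (Lit n)))
    (x : Fin n → ℕ) : Fin n → ℕ :=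
  fun j => if evalDNFM x (φ j) then min (m j) (x j + 1) else x j - 1


/-!
At a state that agrees with `b` off `j0`, every coordinate other than `j0` sits at an extreme
`0` or `m_j`, and the thresholds lie in `{0, …, m_j - 1}`, so each literal not mentioning `x_{j0}`
takes its Boolean value at `a`. By the no-self-inhibition hypothesis `x_{j0}` occurs in `f_{j0}`
only if `m_{j0} = 1`, and then the single step starts at `b` itself. Hence `H_{j0}` keeps the sign
given by `f_{j0}(a) ≠ a_{j0}` along the segment from `b` to `b'`, and `h` moves `x_{j0}` across it
one unit at a time, in `m_{j0}` steps.
-/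

open Function

section DNF

variable {n : ℕ} (m : Fin n → ℕ) (a : Fin n → Bool)

theorem evalLitM_eq_evalLitB {x : Fin n → ℕ} {l : Lit n} (hthr : l.thr + 1 ≤ m l.idx)
    (hx : x l.idx = embX m a l.idx) : evalLitM x l = evalLitB a l := by
  unfold evalLitM evalLitB embX at *
  cases ha : a l.idx <;> simp only [ha] at hx <;> cases l.pos <;> simp [hx] <;> omega

theorem evalDNFM_eq_evalDNFB {x : Fin n → ℕ} {φ : List (List (Lit n))}
    (hthr : ∀ c ∈ φ, ∀ l ∈ c, l.thr + 1 ≤ m l.idx)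
    (hx : ∀ c ∈ φ, ∀ l ∈ c, x l.idx = embX m a l.idx) :
    evalDNFM x φ = evalDNFB a φ := by
  rw [evalDNFM, evalDNFB, Bool.eq_iff_iff]
  simp only [List.any_eq_true, List.all_eq_true]
  refine exists_congr fun c => and_congr_right fun hc => forall₂_congr fun l hl => ?_
  rw [evalLitM_eq_evalLitB m a (hthr c hc l hl) (hx c hc l hl)]

theorem evalDNFM_update_embX {φ : List (List (Lit n))} {j : Fin n} {v : ℕ}
    (hthr : ∀ c ∈ φ, ∀ l ∈ c, l.thr + 1 ≤ m l.idx)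
    (hnsi : 1 < m j → ∀ c ∈ φ, ∀ l ∈ c, l.idx ≠ j) (hv : v = embX m a j ∨ 1 < m j) :
    evalDNFM (update (embX m a) j v) φ = evalDNFB a φ := by
  refine evalDNFM_eq_evalDNFB m a hthr fun c hc l hl => ?_
  by_cases hlj : l.idx = j
  · rcases hv with rfl | hm
    · simp [hlj]
    · exact absurd hlj (hnsi hm c hc l hl)
  · exact update_of_ne hlj _ _

theorem embX_eq_update {a' : Fin n → Bool} {j0 : Fin n} (h : ∀ j, j ≠ j0 → a' j = a j) :
    embX m a' = update (embX m a) j0 (embX m a' j0) := by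
  ext j
  rcases eq_or_ne j j0 with rfl | hj
  · simp
  · simp [update_of_ne hj, embX, h j hj]

end DNF

section Trajectories

variable {n : ℕ} (m : Fin n → ℕ) (φ : Fin n → List (List (Lit n)))

theorem asyncTrans_hDNF_succ {x : Fin n → ℕ} {j : Fin n} (hH : evalDNFM x (φ j) = true)
    (hx : x j < m j) : asyncTrans (hDNF m φ) x (update x j (x j + 1)) := by
  have hstep : hDNF m φ x j = x j + 1 := by simp only [hDNF, hH, if_true]; omega
  refine ⟨j, by omega, fun i hi => update_of_ne hi _ _, Or.inl ⟨by omega, update_self _ _ _⟩⟩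

theorem asyncTrans_hDNF_pred {x : Fin n → ℕ} {j : Fin n} (hH : evalDNFM x (φ j) = false)
    (hx : 0 < x j) : asyncTrans (hDNF m φ) x (update x j (x j - 1)) := by
  have hstep : hDNF m φ x j = x j - 1 := by simp only [hDNF, hH, Bool.false_eq_true, if_false]
  refine ⟨j, by omega, fun i hi => update_of_ne hi _ _, Or.inr ⟨by omega, update_self _ _ _⟩⟩

theorem exists_hDNF_path_up (x : Fin n → ℕ) (j : Fin n)
    (hH : ∀ k < m j, evalDNFM (update x j k) (φ j) = true) :
    ∃ c : ℕ → (Fin n → ℕ), c 0 = update x j 0 ∧ c (m j) = update x j (m j) ∧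
      ∀ k < m j, asyncTrans (hDNF m φ) (c k) (c (k + 1)) := by
  refine ⟨fun k => update x j k, rfl, rfl, fun k hk => ?_⟩
  have := asyncTrans_hDNF_succ m φ (x := update x j k) (by simpa using hH k hk) (by simpa using hk)
  simpa using this

theorem exists_hDNF_path_down (x : Fin n → ℕ) (j : Fin n)
    (hH : ∀ k < m j, evalDNFM (update x j (m j - k)) (φ j) = false) :
    ∃ c : ℕ → (Fin n → ℕ), c 0 = update x j (m j) ∧ c (m j) = update x j 0 ∧
      ∀ k < m j, asyncTrans (hDNF m φ) (c k) (c (k + 1)) := by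
  refine ⟨fun k => update x j (m j - k), by simp, by simp, fun k hk => ?_⟩
  simpa [Nat.sub_sub] using
    asyncTrans_hDNF_pred m φ (x := update x j (m j - k)) (hH k hk) (by simp; omega)

end Trajectories

theorem refinement_lifts_async_general {n : ℕ} (m : Fin n → ℕ)
    (φ : Fin n → List (List (Lit n)))
    (f : (Fin n → Bool) → Fin n → Bool)
    (hf : ∀ x j, f x j = evalDNFB x (φ j))
    (hthr : ∀ j, ∀ c ∈ φ j, ∀ l ∈ c, l.thr + 1 ≤ m l.idx)
    (hnsi : ∀ j, 1 < m j → ∀ c ∈ φ j, ∀ l ∈ c, l.idx ≠ j)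
    (a a' : Fin n → Bool) (j0 : Fin n)
    (h1 : f a j0 ≠ a j0) (h2 : a' j0 = f a j0) (h3 : ∀ j, j ≠ j0 → a' j = a j) :
    ∃ c : ℕ → (Fin n → ℕ), c 0 = embX m a ∧ c (m j0) = embX m a' ∧
      ∀ k < m j0, asyncTrans (hDNF m φ) (c k) (c (k + 1)) := by
  have hline : ∀ v, (v = embX m a j0 ∨ 1 < m j0) →
      evalDNFM (update (embX m a) j0 v) (φ j0) = f a j0 := fun v hv =>
    (hf a j0).symm ▸ evalDNFM_update_embX m a (hthr j0) (hnsi j0) hv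
  have ha : embX m a = update (embX m a) j0 (embX m a j0) := (update_eq_self _ _).symm
  have ha' := embX_eq_update m a h3
  cases haj : a j0
  · have hfa : f a j0 = true := by simpa [haj] using h1
    have hb : embX m a j0 = 0 := by simp [embX, haj]
    have hb' : embX m a' j0 = m j0 := by simp [embX, h2, hfa]
    rw [hb] at ha hline; rw [hb'] at ha'; rw [ha, ha']
    exact exists_hDNF_path_up m φ _ j0 fun k hk => (hline k (by omega)).trans hfa
  · have hfa : f a j0 = false := by simpa [haj] using h1
    have hb : embX m a j0 = m j0 := by simp [embX, haj]
    have hb' : embX m a' j0 = 0 := by simp [embX, h2, hfa]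
    rw [hb] at ha hline; rw [hb'] at ha'; rw [ha, ha']
    exact exists_hDNF_path_down m φ _ j0 fun k hk => (hline _ (by omega)).trans hfa

/-- let h be the refinement of f built from a DNF threshold parameterisation
with no self-inhibited multivalued component. If a → a' is an asynchronous transition of f
changing coordinate j₀, and b, b' are the embeddings of a, a' into X (sending 1 to m_j),
then there is an asynchronous trajectory of h from b to b' of length m_{j₀}. -/
theorem refinement_lifts_async {n : ℕ} (m : Fin n → ℕ) (hm : ∀ j, 1 ≤ m j)
    (φ : Fin n → List (List (Lit n)))
    (f : (Fin n → Bool) → Fin n → Bool)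
    (hf : ∀ x j, f x j = evalDNFB x (φ j))
    (hthr : ∀ j, ∀ c ∈ φ j, ∀ l ∈ c, l.thr + 1 ≤ m l.idx)
    (hnsi : ∀ j, 1 < m j → ∀ c ∈ φ j, ∀ l ∈ c, l.idx ≠ j)
    (a a' : Fin n → Bool) (j0 : Fin n)
    (h1 : f a j0 ≠ a j0) (h2 : a' j0 = f a j0) (h3 : ∀ j, j ≠ j0 → a' j = a j) :
    ∃ c : ℕ → (Fin n → ℕ), c 0 = embX m a ∧ c (m j0) = embX m a' ∧
      ∀ k < m j0, asyncTrans (hDNF m φ) (c k) (c (k + 1)) :=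
  refinement_lifts_async_general m φ f hf hthr hnsi a a' j0 h1 h2 h3
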